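/- With the setup of an exponent function defined from a finite measure: V^A(x) = ∫ max_{i∈A}(w_i(ω)/x_i) dμ(ω) for nonempty A ⊆ I, and for disjoint nonempty A, B ⊆ I with C = I \ (A∪B) nonempty, the quantity d_{A,B}(x) := V^{A∪C}(x) + V^{B∪C}(x) − V^I(x) − V^C(x) equals ∫ [min(max_{i∈A} w_i(ω)/x_i, max_{i∈B} w_i(ω)/x_i) − max_{j∈C} w_j(ω)/x_j]_+ dμ(ω); in particular d_{A,B}(x) ≥ 0 for all x ∈ (0,∞)^I. -/

import Mathlib

open Finset MeasureTheory

/-- Maximum over a finite set with the convention `max ∅ = 0`. -/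
noncomputable def fmax {ι : Type*} (S : Finset ι) (a : ι → ℝ) : ℝ := S.fold max 0 a

/-! Pointwise, with `a = max_A`, `b = max_B`, `c = max_C` of the `w_i/x_i`, one has
`max(a,c) + max(b,c) − max(a,b,c) − c = (min(a,b) − c)⁺`: if `a ≤ b` the left side collapses
to `max(a,c) − c`. Integrating this identity, which is legitimate because each maximum over a
finite set of integrable functions is integrable, gives the formula for `d_{A,B}` with a
nonnegative integrand. -/

section fmax

variable {ι : Type*} (a : ι → ℝ)

lemma fmax_empty : fmax (∅ : Finset ι) a = 0 := rfl

lemma fmax_insert [DecidableEq ι] (S : Finset ι) (i : ι) :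
    fmax (insert i S) a = max (a i) (fmax S a) :=
  fold_insert_idem

lemma fmax_nonneg (S : Finset ι) : 0 ≤ fmax S a := by
  classical
  induction S using Finset.induction_on with
  | empty => rw [fmax_empty]
  | insert _ _ _ ih => rw [fmax_insert]; exact le_max_of_le_right ih

lemma fmax_union [DecidableEq ι] (S T : Finset ι) :
    fmax (S ∪ T) a = max (fmax S a) (fmax T a) := by
  induction S using Finset.induction_on with
  | empty => rw [empty_union, fmax_empty, max_eq_right (fmax_nonneg a T)]
  | insert _ _ _ ih => rw [insert_union, fmax_insert, fmax_insert, ih, max_assoc]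

end fmax

lemma max_add_max_sub_max_sub (a b c : ℝ) :
    max a c + max b c - max (max a b) c - c = max (min a b - c) 0 := by
  rcases le_total a b with h | h
  · rw [max_eq_right h, min_eq_left h, add_sub_cancel_right, ← max_sub_sub_right, sub_self]
  · rw [max_eq_left h, min_eq_right h, add_sub_cancel_left, ← max_sub_sub_right, sub_self]

lemma fmax_union_add_fmax_union_sub {ι : Type*} [DecidableEq ι] (a : ι → ℝ) (S T U : Finset ι) :
    fmax (S ∪ U) a + fmax (T ∪ U) a - fmax (S ∪ T ∪ U) a - fmax U a
      = max (min (fmax S a) (fmax T a) - fmax U a) 0 := by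
  simp only [fmax_union]
  exact max_add_max_sub_max_sub _ _ _

section integral

variable {Ω ι : Type*} [MeasurableSpace Ω] [DecidableEq ι] {μ : Measure Ω} {f : Ω → ι → ℝ}

lemma integrable_fmax (hf : ∀ i, Integrable (fun ω => f ω i) μ) (S : Finset ι) :
    Integrable (fun ω => fmax S (f ω)) μ := by
  induction S using Finset.induction_on with
  | empty => simp only [fmax_empty]; exact integrable_zero Ω ℝ μ
  | insert _ _ _ ih => simp only [fmax_insert]; exact (hf _).sup ih

lemma integral_fmax_union_add_integral_fmax_union_sub
    (hf : ∀ i, Integrable (fun ω => f ω i) μ) (S T U : Finset ι) :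
    (∫ ω, fmax (S ∪ U) (f ω) ∂μ) + (∫ ω, fmax (T ∪ U) (f ω) ∂μ)
        - (∫ ω, fmax (S ∪ T ∪ U) (f ω) ∂μ) - (∫ ω, fmax U (f ω) ∂μ)
      = ∫ ω, max (min (fmax S (f ω)) (fmax T (f ω)) - fmax U (f ω)) 0 ∂μ := by
  have hI := integrable_fmax hf
  calc _ = ∫ ω, fmax (S ∪ U) (f ω) + fmax (T ∪ U) (f ω)
              - fmax (S ∪ T ∪ U) (f ω) - fmax U (f ω) ∂μ := by
        rw [integral_sub ?_ (hI _), integral_sub ?_ (hI _), integral_add (hI _) (hI _)]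
        exacts [(hI _).add (hI _), ((hI _).add (hI _)).sub (hI _)]
    _ = _ := integral_congr_ae (.of_forall fun ω => fmax_union_add_fmax_union_sub (f ω) S T U)

end integral

theorem dAB_eq_integral_general {Ω : Type*} [MeasurableSpace Ω]
    (μ : Measure Ω)
    {ι : Type*} [Fintype ι] [DecidableEq ι]
    (w : Ω → ι → ℝ) (hwint : ∀ i, Integrable (fun ω => w ω i) μ)
    (x : ι → ℝ)
    (A B : Finset ι) :
    (∫ ω, fmax (A ∪ (A ∪ B)ᶜ) (fun i => w ω i / x i) ∂μ)
        + (∫ ω, fmax (B ∪ (A ∪ B)ᶜ) (fun i => w ω i / x i) ∂μ)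
        - (∫ ω, fmax Finset.univ (fun i => w ω i / x i) ∂μ)
        - (∫ ω, fmax ((A ∪ B)ᶜ) (fun i => w ω i / x i) ∂μ)
      = ∫ ω, max (min (fmax A (fun i => w ω i / x i)) (fmax B (fun i => w ω i / x i))
            - fmax ((A ∪ B)ᶜ) (fun i => w ω i / x i)) 0 ∂μ
    ∧ 0 ≤ (∫ ω, fmax (A ∪ (A ∪ B)ᶜ) (fun i => w ω i / x i) ∂μ)
        + (∫ ω, fmax (B ∪ (A ∪ B)ᶜ) (fun i => w ω i / x i) ∂μ)
        - (∫ ω, fmax Finset.univ (fun i => w ω i / x i) ∂μ)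
        - (∫ ω, fmax ((A ∪ B)ᶜ) (fun i => w ω i / x i) ∂μ) := by
  have hd := integral_fmax_union_add_integral_fmax_union_sub (f := fun ω i => w ω i / x i)
    (fun i => (hwint i).div_const (x i)) A B (A ∪ B)ᶜ
  rw [← union_compl (A ∪ B)]
  exact ⟨hd, hd ▸ integral_nonneg fun _ => le_max_right _ _⟩

/-- With `V^J(x) = ∫ max_{i∈J} w_i(ω)/x_i dμ` for a finite measure `μ` and nonnegative
integrable `w`, and disjoint nonempty `A, B ⊆ I` with `C = I \ (A ∪ B)` nonempty, the
quantity `d_{A,B}(x) = V^{A∪C}(x) + V^{B∪C}(x) − V^I(x) − V^C(x)` equals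
`∫ [min(max_{i∈A} w_i/x_i, max_{i∈B} w_i/x_i) − max_{j∈C} w_j/x_j]_+ dμ`;
in particular `d_{A,B}(x) ≥ 0`. -/
theorem dAB_eq_integral {Ω : Type*} [MeasurableSpace Ω]
    (μ : Measure Ω) [IsFiniteMeasure μ]
    {ι : Type*} [Fintype ι] [DecidableEq ι]
    (w : Ω → ι → ℝ) (hwm : ∀ i, Measurable fun ω => w ω i)
    (hw0 : ∀ ω i, 0 ≤ w ω i) (hwint : ∀ i, Integrable (fun ω => w ω i) μ)
    (x : ι → ℝ) (hx : ∀ i, 0 < x i)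
    (A B : Finset ι) (hA : A.Nonempty) (hB : B.Nonempty) (hAB : Disjoint A B)
    (hC : ((A ∪ B)ᶜ : Finset ι).Nonempty) :
    (∫ ω, fmax (A ∪ (A ∪ B)ᶜ) (fun i => w ω i / x i) ∂μ)
        + (∫ ω, fmax (B ∪ (A ∪ B)ᶜ) (fun i => w ω i / x i) ∂μ)
        - (∫ ω, fmax Finset.univ (fun i => w ω i / x i) ∂μ)
        - (∫ ω, fmax ((A ∪ B)ᶜ) (fun i => w ω i / x i) ∂μ)
      = ∫ ω, max (min (fmax A (fun i => w ω i / x i)) (fmax B (fun i => w ω i / x i))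
            - fmax ((A ∪ B)ᶜ) (fun i => w ω i / x i)) 0 ∂μ
    ∧ 0 ≤ (∫ ω, fmax (A ∪ (A ∪ B)ᶜ) (fun i => w ω i / x i) ∂μ)
        + (∫ ω, fmax (B ∪ (A ∪ B)ᶜ) (fun i => w ω i / x i) ∂μ)
        - (∫ ω, fmax Finset.univ (fun i => w ω i / x i) ∂μ)
        - (∫ ω, fmax ((A ∪ B)ᶜ) (fun i => w ω i / x i) ∂μ) :=
  dAB_eq_integral_general μ w hwint x A B
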